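/- arXiv:1804.08512 — 2 statements merged into one kernel-verified Lean document; each statement's English description precedes it below -/
import Mathlib

section
/- Let G ∈ H^∞_{m×p} with T_G T_G* strictly positive, and let Ξ₀ and Θ₀ be the associated matrices. Then G₀ Ξ₀ = I_m and G₀ Θ₀ = 0, where G₀ = G(0). -/
/-!
Setting: `l2 n` models ℓ²₊(ℂⁿ); `lp.single 2 0` is the canonical embedding `E_n`, and
evaluating a sequence at coordinate `k` realizes `E_n* (S_n*)^k`.  Block Toeplitz and
Hankel operators, as well as the (bounded) inverse of `T_G T_G*`, are specified through
their actions on the standard basis vectors of the coordinate spaces.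
-/

noncomputable section
open scoped Matrix

/-- ℂⁿ with the Euclidean norm. -/
abbrev ES (n : ℕ) : Type := EuclideanSpace ℂ (Fin n)

/-- ℓ²₊(ℂⁿ). -/
abbrev l2 (n : ℕ) : Type := lp (fun _ : ℕ => ES n) 2

/-- The `b`-th standard basis vector of ℂⁿ. -/
abbrev eVec (n : ℕ) (b : Fin n) : ES n := EuclideanSpace.single b 1

/-- The matrix function `z ↦ ∑' ν, z ^ ν • F ν` determined by a coefficient sequence. -/
def seriesM {r s : ℕ} (F : ℕ → Matrix (Fin r) (Fin s) ℂ) (z : ℂ) :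
    Matrix (Fin r) (Fin s) ℂ :=
  Matrix.of fun a b => ∑' ν : ℕ, z ^ ν * F ν a b

/-!
The zeroth block row of a lower-triangular Toeplitz operator only sees the zeroth block of its
argument: `E_m* T_G = G₀ E_p*`. Applied to `x = T_G* (T_G T_G*)⁻¹ E_m e_b` (the columns of `Ξ₀`)
this gives `G₀ Ξ₀ = E_m* E_m = I`, and applied to the columns of `I - Θ₀ Θ₀*` it gives
`G₀ (I - Θ₀ Θ₀*) = E_m* T_G E_p = G₀`, i.e. `G₀ Θ₀ Θ₀* = 0`. Taking adjoints,
`Θ₀ (G₀ Θ₀)* = 0`, and injectivity of `Θ₀` gives `G₀ Θ₀ = 0`.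
-/

open scoped ComplexConjugate InnerProductSpace

lemma Matrix.eq_zero_of_mul_eq_zero {R ι κ μ : Type*} [Semiring R] [Fintype κ]
    {A : Matrix ι κ R} (hA : ∀ w : κ → R, A *ᵥ w = 0 → w = 0) {N : Matrix κ μ R}
    (h : A * N = 0) : N = 0 := by
  ext i j
  have hcol : A *ᵥ (fun i => N i j) = 0 := funext fun a => congrFun (congrFun h a) j
  exact congrFun (hA _ hcol) i

lemma Matrix.mul_eq_zero_of_mul_mul_conjTranspose_eq_zero {R ι κ μ : Type*} [CommSemiring R]
    [StarRing R] [Fintype ι] [Fintype κ] {A : Matrix μ ι R} {Θ : Matrix ι κ R}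
    (hΘ : ∀ w : κ → R, Θ *ᵥ w = 0 → w = 0) (h : A * (Θ * Θᴴ) = 0) : A * Θ = 0 := by
  have hΘA : Θ * (A * Θ)ᴴ = 0 := by
    rw [← Matrix.conjTranspose_conjTranspose Θ, ← Matrix.conjTranspose_mul,
      Matrix.conjTranspose_conjTranspose, Matrix.mul_assoc, h, Matrix.conjTranspose_zero]
  exact Matrix.conjTranspose_eq_zero.mp (Matrix.eq_zero_of_mul_eq_zero hΘ hΘA)

lemma l2_apply_eq_inner {n : ℕ} (u : l2 n) (i : ℕ) (a : Fin n) :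
    u i a = ⟪(lp.single 2 i (eVec n a) : l2 n), u⟫_ℂ := by
  rw [lp.inner_single_left, EuclideanSpace.inner_single_left, map_one, one_mul]

section ZerothBlockRow

variable {m p : ℕ} {G₀ : Matrix (Fin m) (Fin p) ℂ} {TG : l2 p →L[ℂ] l2 m}
  (hrow : ∀ (j : ℕ) (b : Fin p) (a : Fin m),
    (TG (lp.single 2 j (eVec p b))) 0 a = if j = 0 then G₀ a b else 0)
include hrow

lemma adjoint_single_zero_eq (a : Fin m) :
    TG.adjoint (lp.single 2 0 (eVec m a))
      = lp.single 2 0 (WithLp.toLp 2 fun c => conj (G₀ a c) : ES p) := by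
  refine lp.ext (funext fun j => PiLp.ext fun b => ?_)
  rw [l2_apply_eq_inner, ContinuousLinearMap.adjoint_inner_right, ← inner_conj_symm,
    ← l2_apply_eq_inner, hrow]
  rcases eq_or_ne j 0 with rfl | hj
  · simp
  · simp [hj]

lemma apply_zero_eq_mulVec (x : l2 p) (a : Fin m) : (TG x) 0 a = (G₀ *ᵥ ⇑(x 0)) a := by
  rw [l2_apply_eq_inner, ← ContinuousLinearMap.adjoint_inner_left, adjoint_single_zero_eq hrow,
    lp.inner_single_left, PiLp.inner_apply]
  simp [Matrix.mulVec, dotProduct, mul_comm]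

lemma mul_of_apply_zero {ι : Type*} (v : ι → l2 p) :
    G₀ * Matrix.of (fun c b => v b 0 c) = Matrix.of fun a b => (TG (v b)) 0 a := by
  ext a b
  rw [Matrix.of_apply, apply_zero_eq_mulVec hrow]
  rfl

end ZerothBlockRow

theorem bezout_corona_stmt0_general
    (m p k : ℕ)
    (G : ℕ → Matrix (Fin m) (Fin p) ℂ)
    (TG : l2 p →L[ℂ] l2 m)
    (hTG : ∀ (j : ℕ) (b : Fin p) (i : ℕ) (a : Fin m),
      (TG (lp.single 2 j (eVec p b))) i a = if j ≤ i then G (i - j) a b else 0)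
    (Tinv : l2 m →L[ℂ] l2 m)
    (hT2 : ∀ x, TG (TG.adjoint (Tinv x)) = x)
    (Ξ₀ : Matrix (Fin p) (Fin m) ℂ)
    (hΞ₀ : ∀ (a : Fin p) (b : Fin m),
      Ξ₀ a b = (TG.adjoint (Tinv (lp.single 2 0 (eVec m b)))) 0 a)
    (Θ₀ : Matrix (Fin p) (Fin k) ℂ)
    (hΘ₀ker : ∀ w : Fin k → ℂ, Θ₀.mulVec w = 0 → w = 0)
    (hΘ₀ : ∀ (a b : Fin p), (Θ₀ * Θ₀ᴴ) a b
      = (if a = b then 1 else 0) - (TG.adjoint (Tinv (TG (lp.single 2 0 (eVec p b))))) 0 a) :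
    G 0 * Ξ₀ = 1 ∧ G 0 * Θ₀ = 0 := by
  have hTG₀ : ∀ j b a, (TG (lp.single 2 j (eVec p b))) 0 a = if j = 0 then G 0 a b else 0 := by
    intro j b a
    rcases eq_or_ne j 0 with rfl | hj
    · simp [hTG]
    · simp [hTG, hj]
  have hGΞ : G 0 * Ξ₀ = 1 := by
    rw [show Ξ₀ = Matrix.of fun c b => _ from Matrix.ext hΞ₀, mul_of_apply_zero hTG₀]
    ext a b
    simp [hT2, Matrix.one_apply]
  set P : Matrix (Fin p) (Fin p) ℂ :=
    Matrix.of fun c b => (TG.adjoint (Tinv (TG (lp.single 2 0 (eVec p b))))) 0 c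
  have hΘΘ : Θ₀ * Θ₀ᴴ = 1 - P := by
    ext a b
    simp [hΘ₀, P, Matrix.one_apply]
  have hGP : G 0 * P = G 0 := by
    rw [mul_of_apply_zero hTG₀]
    ext a b
    simp [hT2, hTG₀]
  refine ⟨hGΞ, Matrix.mul_eq_zero_of_mul_mul_conjTranspose_eq_zero hΘ₀ker ?_⟩
  rw [hΘΘ, Matrix.mul_sub, Matrix.mul_one, hGP, sub_self]

/-- If `G ∈ H^∞_{m×p}` and `T_G T_G*` is strictly positive (i.e. boundedly
invertible, with inverse `Tinv`), and `Ξ₀ = E_p* T_G* (T_G T_G*)⁻¹ E_m`,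
`Θ₀ Θ₀* = I_p - E_p* T_G* (T_G T_G*)⁻¹ T_G E_p` with `ker Θ₀ = 0`, then
`G₀ Ξ₀ = I_m` and `G₀ Θ₀ = 0`, where `G₀ = G(0)`. -/
theorem bezout_corona_stmt0
    (m p k : ℕ) (hm : 0 < m) (hmp : m ≤ p)
    (G : ℕ → Matrix (Fin m) (Fin p) ℂ)
    (TG : l2 p →L[ℂ] l2 m)
    (hTG : ∀ (j : ℕ) (b : Fin p) (i : ℕ) (a : Fin m),
      (TG (lp.single 2 j (eVec p b))) i a = if j ≤ i then G (i - j) a b else 0)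
    (Tinv : l2 m →L[ℂ] l2 m)
    (hT1 : ∀ x, Tinv (TG (TG.adjoint x)) = x)
    (hT2 : ∀ x, TG (TG.adjoint (Tinv x)) = x)
    (Ξ₀ : Matrix (Fin p) (Fin m) ℂ)
    (hΞ₀ : ∀ (a : Fin p) (b : Fin m),
      Ξ₀ a b = (TG.adjoint (Tinv (lp.single 2 0 (eVec m b)))) 0 a)
    (Θ₀ : Matrix (Fin p) (Fin k) ℂ)
    (hΘ₀ker : ∀ w : Fin k → ℂ, Θ₀.mulVec w = 0 → w = 0)
    (hΘ₀ : ∀ (a b : Fin p), (Θ₀ * Θ₀ᴴ) a b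
      = (if a = b then 1 else 0) - (TG.adjoint (Tinv (TG (lp.single 2 0 (eVec p b))))) 0 a) :
    G 0 * Ξ₀ = 1 ∧ G 0 * Θ₀ = 0 :=
  bezout_corona_stmt0_general m p k G TG hTG Tinv hT2 Ξ₀ hΞ₀ Θ₀ hΘ₀ker hΘ₀
end
end

section
/- Let G ∈ H^∞_{m×p} with T_G T_G* strictly positive and let Y be the associated p×p matrix function on 𝔻. Then G(z) Y(z) = G₀ for every z ∈ 𝔻, where G₀ = G(0). -/
/-!
Setting: `l2 n` models ℓ²₊(ℂⁿ); `lp.single 2 0` is the canonical embedding `E_n`, and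
evaluating a sequence at coordinate `k` realizes `E_n* (S_n*)^k`.  Block Toeplitz and
Hankel operators, as well as the (bounded) inverse of `T_G T_G*`, are specified through
their actions on the standard basis vectors of the coordinate spaces.
-/

noncomputable section
open scoped Matrix

/-!
Put `u = T_G* (T_G T_G*)⁻¹ H_G E_p e_b`. Then `T_G u = H_G E_p e_b`, whose `n`-th entry is
`G_{n+1} e_b`. On generating functions `T_G` is multiplication by `G` (a Cauchy product), so
`G(z) û(z) = ∑ zⁿ G_{n+1} e_b = (G(z) - G₀) e_b / z`, and therefore
`G(z) Y(z) e_b = G(z) e_b - z G(z) û(z) = G₀ e_b`.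
-/

open Finset

lemma inner_lp_single_eVec {n : ℕ} (i : ℕ) (a : Fin n) (y : l2 n) :
    inner ℂ (lp.single 2 i (eVec n a) : l2 n) y = y i a := by
  simp [lp.inner_single_left, EuclideanSpace.inner_single_left]

lemma norm_apply_apply_le_norm {n : ℕ} (y : l2 n) (i : ℕ) (a : Fin n) :
    ‖y i a‖ ≤ ‖y‖ := by
  simpa [inner_lp_single_eVec, lp.norm_single, PiLp.norm_single] using
    norm_inner_le_norm (𝕜 := ℂ) (lp.single 2 i (eVec n a) : l2 n) y

lemma lp_single_eq_sum {n : ℕ} (j : ℕ) (v : ES n) :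
    (lp.single 2 j v : l2 n) = ∑ c, v c • lp.single 2 j (eVec n c) := by
  conv_lhs => rw [← (EuclideanSpace.basisFun (Fin n) ℂ).sum_repr v]
  change lp.lsingle (𝕜 := ℂ) 2 j _ = _
  simp [map_sum]

lemma hasSum_clm_apply_apply {m p : ℕ} (T : l2 p →L[ℂ] l2 m) (x : l2 p) (n : ℕ)
    (a : Fin m) :
    HasSum (fun j => ∑ c, x j c * T (lp.single 2 j (eVec p c)) n a) (T x n a) := by
  let φ : l2 p →L[ℂ] ℂ := (innerSL ℂ (lp.single 2 n (eVec m a) : l2 m)).comp T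
  have hφ : ∀ y, φ y = T y n a := fun y => inner_lp_single_eVec n a (T y)
  convert φ.hasSum (lp.hasSum_single ENNReal.ofNat_ne_top x) using 1
  · ext j
    rw [lp_single_eq_sum, map_sum]
    simp only [map_smul, smul_eq_mul]
    simp only [hφ]
  · exact (hφ x).symm

lemma summable_norm_pow_mul_of_norm_le {f : ℕ → ℂ} {C : ℝ} {z : ℂ} (hz : ‖z‖ < 1)
    (hf : ∀ n, ‖f n‖ ≤ C) : Summable fun n => ‖z ^ n * f n‖ := by
  refine .of_nonneg_of_le (fun _ => norm_nonneg _) (fun n => ?_)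
    ((summable_geometric_of_lt_one (norm_nonneg z) hz).mul_right C)
  rw [norm_mul, norm_pow]
  exact mul_le_mul_of_nonneg_left (hf n) (by positivity)

lemma tsum_pow_mul_eq_add_mul_tsum_succ {f : ℕ → ℂ} {z : ℂ}
    (hf : Summable fun n => z ^ n * f n) :
    ∑' n, z ^ n * f n = f 0 + z * ∑' n, z ^ n * f (n + 1) := by
  rw [hf.tsum_eq_zero_add, ← tsum_mul_left]
  simp only [pow_zero, one_mul, pow_succ]
  congr 1
  exact tsum_congr fun n => by ring

def IsBlockToeplitz {m p : ℕ} (G : ℕ → Matrix (Fin m) (Fin p) ℂ) (T : l2 p →L[ℂ] l2 m) :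
    Prop :=
  ∀ (j : ℕ) (b : Fin p) (i : ℕ) (a : Fin m),
    (T (lp.single 2 j (eVec p b))) i a = if j ≤ i then G (i - j) a b else 0

namespace IsBlockToeplitz

variable {m p : ℕ} {G : ℕ → Matrix (Fin m) (Fin p) ℂ} {T : l2 p →L[ℂ] l2 m}

lemma apply_apply (hT : IsBlockToeplitz G T) (x : l2 p) (n : ℕ) (a : Fin m) :
    T x n a = ∑ k ∈ range (n + 1), ∑ c, G k a c * x (n - k) c := by
  have hsupp : ∀ j ∉ range (n + 1),
      ∑ c, x j c * T (lp.single 2 j (eVec p c)) n a = 0 := by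
    intro j hj
    simp [hT j, Nat.lt_succ_iff.not.mp (mem_range.not.mp hj)]
  rw [(hasSum_clm_apply_apply T x n a).unique (hasSum_sum_of_ne_finset_zero hsupp),
    ← sum_range_reflect]
  refine sum_congr rfl fun k hk => sum_congr rfl fun c _ => ?_
  have hkn : k ≤ n := Nat.lt_succ_iff.mp (mem_range.mp hk)
  rw [hT, if_pos (by omega), Nat.add_sub_cancel, Nat.sub_sub_self hkn, mul_comm]

lemma norm_coeff_le (hT : IsBlockToeplitz G T) (ν : ℕ) (a : Fin m) (c : Fin p) :
    ‖G ν a c‖ ≤ ‖T‖ := by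
  have hcol : T (lp.single 2 0 (eVec p c)) ν a = G ν a c := by simpa using hT 0 c ν a
  calc ‖G ν a c‖ ≤ ‖T (lp.single 2 0 (eVec p c))‖ :=
        hcol ▸ norm_apply_apply_le_norm _ _ _
    _ ≤ ‖T‖ * ‖(lp.single 2 0 (eVec p c) : l2 p)‖ := T.le_opNorm _
    _ = ‖T‖ := by simp [lp.norm_single, PiLp.norm_single]

lemma hasSum_pow_mul_apply (hT : IsBlockToeplitz G T) {z : ℂ} (hz : ‖z‖ < 1) (x : l2 p)
    (a : Fin m) :
    HasSum (fun n => z ^ n * T x n a) (∑ c, seriesM G z a c * ∑' i, z ^ i * x i c) := by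
  have hcauchy := fun c => hasSum_sum_range_mul_of_summable_norm
    (summable_norm_pow_mul_of_norm_le hz (hT.norm_coeff_le · a c))
    (summable_norm_pow_mul_of_norm_le hz (norm_apply_apply_le_norm x · c))
  refine (hasSum_sum fun c _ => hcauchy c).congr_fun fun n => ?_
  rw [hT.apply_apply, sum_comm, mul_sum]
  refine sum_congr rfl fun c _ => ?_
  rw [mul_sum]
  refine sum_congr rfl fun k hk => ?_
  rw [← Nat.add_sub_cancel' (Nat.lt_succ_iff.mp (mem_range.mp hk)), pow_add,
    Nat.add_sub_cancel_left]
  ring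

end IsBlockToeplitz

theorem bezout_corona_stmt3_general
    (m p : ℕ)
    (G : ℕ → Matrix (Fin m) (Fin p) ℂ)
    (TG : l2 p →L[ℂ] l2 m)
    (hTG : ∀ (j : ℕ) (b : Fin p) (i : ℕ) (a : Fin m),
      (TG (lp.single 2 j (eVec p b))) i a = if j ≤ i then G (i - j) a b else 0)
    (HG : l2 p →L[ℂ] l2 m)
    (hHG : ∀ (j : ℕ) (b : Fin p) (i : ℕ) (a : Fin m),
      (HG (lp.single 2 j (eVec p b))) i a = G (i + j + 1) a b)
    (Tinv : l2 m →L[ℂ] l2 m)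
    (hT2 : ∀ x, TG (TG.adjoint (Tinv x)) = x)
    (Y : ℂ → Matrix (Fin p) (Fin p) ℂ)
    (hY : ∀ z ∈ Metric.ball (0 : ℂ) 1, ∀ (a b : Fin p),
      Y z a b = (if a = b then 1 else 0)
        - z * ∑' i : ℕ, z ^ i *
            (TG.adjoint (Tinv (HG (lp.single 2 0 (eVec p b))))) i a) :
    ∀ z ∈ Metric.ball (0 : ℂ) 1, seriesM G z * Y z = G 0 := by
  have hT : IsBlockToeplitz G TG := hTG
  intro z hz
  have hz1 : ‖z‖ < 1 := mem_ball_zero_iff.mp hz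
  ext a b
  set u : l2 p := TG.adjoint (Tinv (HG (lp.single 2 0 (eVec p b))))
  have hTu : ∀ n, TG u n a = G (n + 1) a b := fun n => by
    simpa [u, hT2] using hHG 0 b n a
  have hGu := (hT.hasSum_pow_mul_apply hz1 u a).tsum_eq
  have hshift := tsum_pow_mul_eq_add_mul_tsum_succ
    (summable_norm_pow_mul_of_norm_le hz1 (hT.norm_coeff_le · a b)).of_norm
  simp only [hTu] at hGu
  calc (seriesM G z * Y z) a b
      = seriesM G z a b - z * ∑ c, seriesM G z a c * ∑' i, z ^ i * u i c := by
        simp only [Matrix.mul_apply, hY z hz, mul_sub, mul_ite, mul_one, mul_zero,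
          sum_sub_distrib, sum_ite_eq', mem_univ, if_true, mul_sum]
        exact congrArg _ (sum_congr rfl fun c _ => by ring)
    _ = G 0 a b := by
        rw [← hGu]
        exact sub_eq_of_eq_add hshift

/-- For `G ∈ H^∞_{m×p}` with `T_G T_G*` strictly positive and `Y` the
associated function, `G(z) Y(z) = G₀` for every `z ∈ 𝔻`, where `G₀ = G(0)`. -/
theorem bezout_corona_stmt3
    (m p : ℕ) (hm : 0 < m) (hmp : m ≤ p)
    (G : ℕ → Matrix (Fin m) (Fin p) ℂ)
    (TG : l2 p →L[ℂ] l2 m)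
    (hTG : ∀ (j : ℕ) (b : Fin p) (i : ℕ) (a : Fin m),
      (TG (lp.single 2 j (eVec p b))) i a = if j ≤ i then G (i - j) a b else 0)
    (HG : l2 p →L[ℂ] l2 m)
    (hHG : ∀ (j : ℕ) (b : Fin p) (i : ℕ) (a : Fin m),
      (HG (lp.single 2 j (eVec p b))) i a = G (i + j + 1) a b)
    (Tinv : l2 m →L[ℂ] l2 m)
    (hT1 : ∀ x, Tinv (TG (TG.adjoint x)) = x)
    (hT2 : ∀ x, TG (TG.adjoint (Tinv x)) = x)
    (Y : ℂ → Matrix (Fin p) (Fin p) ℂ)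
    (hY : ∀ z ∈ Metric.ball (0 : ℂ) 1, ∀ (a b : Fin p),
      Y z a b = (if a = b then 1 else 0)
        - z * ∑' i : ℕ, z ^ i *
            (TG.adjoint (Tinv (HG (lp.single 2 0 (eVec p b))))) i a) :
    ∀ z ∈ Metric.ball (0 : ℂ) 1, seriesM G z * Y z = G 0 :=
  bezout_corona_stmt3_general m p G TG hTG HG hHG Tinv hT2 Y hY
end
end
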